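/- Let φ = (f₁,…,f_n) : 𝔻 → ℂⁿ be a holomorphic curve with φ'(z) ≠ 0 and σ(z) = (1/2)·log(|f₁'(z)|² + ⋯ + |f_n'(z)|²). Then for every z ∈ 𝔻, the Euclidean norm of the vector φ''(z) − σ_x(z)·φ'(z) + σ_y(z)·(i·φ'(z)) in ℂⁿ satisfies ‖φ''(z) − σ_x(z)·φ'(z) + σ_y(z)·(i·φ'(z))‖² = (1/2)·e^{2σ(z)}·Δσ(z). (Equivalently, the second fundamental form of the surface Σ = φ(𝔻) ⊂ ℝ²ⁿ satisfies |II(V,V)|² = (1/2)·|K(φ)| along φ, where V = φ'/|φ'| and K = −e^{−2σ}Δσ is the Gaussian curvature.) -/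

import Mathlib

open Set Metric Complex

noncomputable section

/-- The Laplacian `Δu = u_xx + u_yy` of a real-valued function on `ℂ`. -/
def lap (u : ℂ → ℝ) (z : ℂ) : ℝ :=
  lineDeriv ℝ (fun w => lineDeriv ℝ u w 1) z 1 +
    lineDeriv ℝ (fun w => lineDeriv ℝ u w Complex.I) z Complex.I

/-- `σ(z) = (1/2)·log(|f₁'(z)|² + ⋯ + |f_n'(z)|²)` for a holomorphic curve `φ`. -/
def curveSigma {n : ℕ} (φ : ℂ → EuclideanSpace ℂ (Fin n)) (z : ℂ) : ℝ :=
  (1 / 2) * Real.log (‖deriv φ z‖ ^ 2)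

lemma hasLineDerivAt_re_mul_inner {E : Type*} [NormedAddCommGroup E] [InnerProductSpace ℂ E]
    {a b : ℂ → E} {a' b' : E} {w : ℂ} (ha : HasDerivAt a a' w) (hb : HasDerivAt b b' w)
    (v u : ℂ) :
    HasLineDerivAt ℝ (fun z => (v * (inner ℂ (a z) (b z) : ℂ)).re)
      ((v * (u * (inner ℂ (a w) b' : ℂ) + (starRingEnd ℂ) u * (inner ℂ a' (b w) : ℂ))).re) w u := by
  have haR := (ha.hasFDerivAt).restrictScalars ℝ
  have hbR := (hb.hasFDerivAt).restrictScalars ℝ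
  have hi := (haR.inner ℂ hbR).const_mul v
  have h3 := (Complex.reCLM.hasFDerivAt).comp w hi
  have h4 := h3.hasLineDerivAt u
  simpa [fderivInnerCLM_apply, inner_smul_left, inner_smul_right, mul_add, Function.comp_def,
    mul_comm, mul_left_comm] using h4

lemma re_inner_self {E : Type*} [NormedAddCommGroup E] [InnerProductSpace ℂ E] (x : E) :
    ((1:ℂ) * (inner ℂ x x : ℂ)).re = ‖x‖ ^ 2 := by
  rw [one_mul, ← RCLike.re_eq_complex_re]
  exact inner_self_eq_norm_sq x

lemma re_inner_self' {E : Type*} [NormedAddCommGroup E] [InnerProductSpace ℂ E] (x : E) :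
    ((inner ℂ x x : ℂ)).re = ‖x‖ ^ 2 := by
  rw [← RCLike.re_eq_complex_re]
  exact inner_self_eq_norm_sq x

lemma inner_self_ofReal {E : Type*} [NormedAddCommGroup E] [InnerProductSpace ℂ E] (x : E) :
    (inner ℂ x x : ℂ) = ((‖x‖ ^ 2 : ℝ) : ℂ) := by
  apply Complex.ext
  · rw [re_inner_self' x, Complex.ofReal_re]
  · rw [Complex.ofReal_im, ← RCLike.im_eq_complex_im]
    exact inner_self_im x

lemma hasLineDerivAt_curveSigma {n : ℕ} {φ : ℂ → EuclideanSpace ℂ (Fin n)}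
    {w : ℂ} (hg : HasDerivAt (deriv φ) (deriv (deriv φ) w) w)
    (h0 : deriv φ w ≠ 0) (v : ℂ) :
    HasLineDerivAt ℝ (curveSigma φ)
      ((v * (inner ℂ (deriv φ w) (deriv (deriv φ) w) : ℂ)).re / ‖deriv φ w‖ ^ 2) w v := by
  have hgg := hasLineDerivAt_re_mul_inner hg hg 1 v
  have hn0 : (0:ℝ) < ‖deriv φ w‖ := norm_pos_iff.mpr h0
  have hpos : (0:ℝ) < ‖deriv φ w‖ ^ 2 := by positivity
  rw [HasLineDerivAt] at hgg ⊢
  have e0 : w + (0:ℝ) • v = w := by simp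
  have hne : ((fun t : ℝ => ((1:ℂ) * (inner ℂ (deriv φ (w + t • v)) (deriv φ (w + t • v)) : ℂ)).re) 0) ≠ 0 := by
    simp only [e0, re_inner_self]; exact ne_of_gt hpos
  have hfin := ((Real.hasDerivAt_log hne).comp (0:ℝ) hgg).const_mul (1/2 : ℝ)
  convert hfin using 1
  · rfl
  · funext t
    simp only [curveSigma, Function.comp_apply, re_inner_self]
  · simp only [e0, re_inner_self, Function.comp_apply, one_mul, re_inner_self']
    have hQ : (inner ℂ (deriv (deriv φ) w) (deriv φ w) : ℂ)
        = (starRingEnd ℂ) (inner ℂ (deriv φ w) (deriv (deriv φ) w) : ℂ) :=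
      (inner_conj_symm _ _).symm
    simp only [one_mul, hQ, Complex.add_re, Complex.mul_re, Complex.conj_re, Complex.conj_im]
    field_simp
    ring

lemma hasLineDerivAt_q {n : ℕ} {φ : ℂ → EuclideanSpace ℂ (Fin n)} {z : ℂ}
    (hg : HasDerivAt (deriv φ) (deriv (deriv φ) z) z)
    (hg2 : HasDerivAt (deriv (deriv φ)) (deriv (deriv (deriv φ)) z) z)
    (h0 : deriv φ z ≠ 0) (v u : ℂ) :
    HasLineDerivAt ℝ
      (fun w => (v * (inner ℂ (deriv φ w) (deriv (deriv φ) w) : ℂ)).re / ‖deriv φ w‖ ^ 2)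
      (((v * (u * (inner ℂ (deriv φ z) (deriv (deriv (deriv φ)) z) : ℂ) +
            (starRingEnd ℂ) u * (inner ℂ (deriv (deriv φ) z) (deriv (deriv φ) z) : ℂ))).re *
            ‖deriv φ z‖ ^ 2 -
          (v * (inner ℂ (deriv φ z) (deriv (deriv φ) z) : ℂ)).re *
            ((1:ℂ) * (u * (inner ℂ (deriv φ z) (deriv (deriv φ) z) : ℂ) +
              (starRingEnd ℂ) u * (inner ℂ (deriv (deriv φ) z) (deriv φ z) : ℂ))).re) /
        (‖deriv φ z‖ ^ 2) ^ 2) z u := by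
  have hN := hasLineDerivAt_re_mul_inner hg hg2 v u
  have hD := hasLineDerivAt_re_mul_inner hg hg 1 u
  have hn0 : (0:ℝ) < ‖deriv φ z‖ := norm_pos_iff.mpr h0
  rw [HasLineDerivAt] at hN hD ⊢
  have e0 : z + (0:ℝ) • u = z := by simp
  have hne : ((fun t : ℝ =>
      ((1:ℂ) * (inner ℂ (deriv φ (z + t • u)) (deriv φ (z + t • u)) : ℂ)).re) 0) ≠ 0 := by
    simp only [e0, re_inner_self]; positivity
  have hdiv := hN.div hD hne
  convert hdiv using 1
  · rfl
  · funext t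
    simp only [re_inner_self]
    rfl
  · simp only [e0, re_inner_self]

/-- **Lemma 1.** For a holomorphic curve `φ : 𝔻 → ℂⁿ` with `φ' ≠ 0`,
`‖φ'' − σ_x·φ' + σ_y·(i·φ')‖² = (1/2)·e^{2σ}·Δσ`; equivalently, the second fundamental
form of `Σ = φ(𝔻)` satisfies `|II(V,V)|² = (1/2)|K(φ)|` along `φ`, where `V = φ'/|φ'|`
and `K = −e^{−2σ}Δσ` is the Gaussian curvature. -/
theorem second_fundamental_form_sq {n : ℕ} (φ : ℂ → EuclideanSpace ℂ (Fin n))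
    (hφ : DifferentiableOn ℂ φ (ball (0 : ℂ) 1))
    (hφ' : ∀ z ∈ ball (0 : ℂ) 1, deriv φ z ≠ 0) :
    ∀ z ∈ ball (0 : ℂ) 1,
      ‖deriv (deriv φ) z - lineDeriv ℝ (curveSigma φ) z 1 • deriv φ z +
          lineDeriv ℝ (curveSigma φ) z Complex.I • (Complex.I • deriv φ z)‖ ^ 2 =
        (1 / 2) * Real.exp (2 * curveSigma φ z) * lap (curveSigma φ) z := by
  intro z hz
  have hA : AnalyticOnNhd ℂ φ (ball (0:ℂ) 1) := hφ.analyticOnNhd isOpen_ball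
  have hgAt : ∀ w ∈ ball (0:ℂ) 1, HasDerivAt (deriv φ) (deriv (deriv φ) w) w :=
    fun w hw => (hA.deriv w hw).differentiableAt.hasDerivAt
  have hg2At : HasDerivAt (deriv (deriv φ)) (deriv (deriv (deriv φ)) z) z :=
    (hA.deriv.deriv z hz).differentiableAt.hasDerivAt
  have hσ : ∀ w ∈ ball (0:ℂ) 1, ∀ v : ℂ, lineDeriv ℝ (curveSigma φ) w v
      = (v * (inner ℂ (deriv φ w) (deriv (deriv φ) w) : ℂ)).re / ‖deriv φ w‖ ^ 2 :=
    fun w hw v => (hasLineDerivAt_curveSigma (hgAt w hw) (hφ' w hw) v).lineDeriv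
  -- names
  set g : EuclideanSpace ℂ (Fin n) := deriv φ z with hgdef
  set g2 : EuclideanSpace ℂ (Fin n) := deriv (deriv φ) z with hg2def
  set P : ℂ := inner ℂ (deriv φ z) (deriv (deriv φ) z) with hPdef
  set Q : ℂ := inner ℂ (deriv φ z) (deriv (deriv (deriv φ)) z) with hQdef
  set H : ℝ := ‖deriv φ z‖ ^ 2 with hHdef
  set A : ℝ := ‖deriv (deriv φ) z‖ ^ 2 with hAdef
  have hn0 : (0:ℝ) < ‖deriv φ z‖ := norm_pos_iff.mpr (hφ' z hz)
  have hHpos : (0:ℝ) < H := by rw [hHdef]; positivity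
  have hAc : (inner ℂ (deriv (deriv φ) z) (deriv (deriv φ) z) : ℂ) = ((A:ℝ):ℂ) := by
    rw [hAdef]; exact inner_self_ofReal _
  have hHc : (inner ℂ (deriv φ z) (deriv φ z) : ℂ) = ((H:ℝ):ℂ) := by
    rw [hHdef]; exact inner_self_ofReal _
  have hPc : (inner ℂ (deriv (deriv φ) z) (deriv φ z) : ℂ) = (starRingEnd ℂ) P := by
    rw [hPdef]; exact (inner_conj_symm _ _).symm
  -- Laplacian value
  have hball : ball (0:ℂ) 1 ∈ nhds z := isOpen_ball.mem_nhds hz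
  have hlap2 : ∀ v : ℂ, lineDeriv ℝ (fun w => lineDeriv ℝ (curveSigma φ) w v) z v
      = ((v * (v * Q + (starRingEnd ℂ) v * ((A:ℝ):ℂ))).re * H -
          (v * P).re * ((1:ℂ) * (v * P + (starRingEnd ℂ) v * (starRingEnd ℂ) P)).re) / H ^ 2 := by
    intro v
    have hev : (fun w => lineDeriv ℝ (curveSigma φ) w v) =ᶠ[nhds z]
        (fun w => (v * (inner ℂ (deriv φ w) (deriv (deriv φ) w) : ℂ)).re / ‖deriv φ w‖ ^ 2) :=
      Filter.eventually_of_mem hball (fun w hw => hσ w hw v)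
    rw [hev.lineDeriv_eq]
    have := (hasLineDerivAt_q (hgAt z hz) hg2At (hφ' z hz) v v).lineDeriv
    rw [this, hAc, hPc]
  have hlapval : lap (curveSigma φ) z = (2*A*H - 2*(P.re^2 + P.im^2)) / H^2 := by
    rw [lap, hlap2 1, hlap2 Complex.I]
    simp only [one_mul, Complex.add_re, Complex.add_im, Complex.mul_re, Complex.mul_im,
      Complex.conj_re, Complex.conj_im, Complex.I_re, Complex.I_im,
      Complex.ofReal_re, Complex.ofReal_im, Complex.one_re, Complex.one_im]
    field_simp
    ring
  -- sigma derivative values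
  have hσx : lineDeriv ℝ (curveSigma φ) z 1 = P.re / H := by
    rw [hσ z hz 1]; rw [← hPdef, ← hHdef, one_mul]
  have hσy : lineDeriv ℝ (curveSigma φ) z Complex.I = -P.im / H := by
    rw [hσ z hz Complex.I]; rw [← hPdef, ← hHdef]
    congr 1
    simp [Complex.mul_re]
  -- rewrite the vector
  have hsmul : ∀ (r : ℝ) (x : EuclideanSpace ℂ (Fin n)), r • x = ((r:ℝ):ℂ) • x := by
    intro r x
    rw [← smul_one_smul ℂ r x, Complex.real_smul, mul_one]
  have hHne : ((H:ℝ):ℂ) ≠ 0 := by exact_mod_cast hHpos.ne'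
  have hscal : ((P.re / H : ℝ) : ℂ) - ((-P.im / H : ℝ) : ℂ) * Complex.I = P / (H:ℂ) := by
    rw [eq_div_iff hHne]
    push_cast
    field_simp [hHne]
    rw [sub_neg_eq_add]; exact Complex.re_add_im P
  have hW : deriv (deriv φ) z - lineDeriv ℝ (curveSigma φ) z 1 • deriv φ z +
      lineDeriv ℝ (curveSigma φ) z Complex.I • (Complex.I • deriv φ z)
      = deriv (deriv φ) z - (P / (H:ℂ)) • deriv φ z := by
    rw [hσx, hσy, hsmul (P.re / H), hsmul (-P.im / H), smul_smul]
    rw [sub_eq_add_neg, ← neg_smul, add_assoc, ← add_smul,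
      sub_eq_add_neg, ← neg_smul]
    congr 1
    rw [← hscal]
    ring_nf
  rw [hW]
  -- norm computation
  have hnorm : ‖deriv (deriv φ) z - (P / (H:ℂ)) • deriv φ z‖ ^ 2
      = A - (P.re^2 + P.im^2) / H := by
    rw [← re_inner_self' (deriv (deriv φ) z - (P / (H:ℂ)) • deriv φ z)]
    rw [inner_sub_left, inner_sub_right, inner_sub_right, inner_smul_left,
      inner_smul_right, inner_smul_left, inner_smul_right]
    rw [hAc, hHc, hPc, ← hPdef]
    simp only [Complex.sub_re, Complex.add_re, Complex.mul_re, Complex.mul_im,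
      Complex.conj_re, Complex.conj_im, Complex.div_re, Complex.div_im,
      Complex.ofReal_re, Complex.ofReal_im, Complex.normSq_apply]
    field_simp
    ring
  rw [hnorm, hlapval]
  have hexp : Real.exp (2 * curveSigma φ z) = H := by
    rw [curveSigma, ← hHdef, show (2:ℝ) * ((1/2) * Real.log H) = Real.log H by ring,
      Real.exp_log hHpos]
  rw [hexp]
  field_simp


end
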